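/- arXiv:1510.01307 — 4 statements merged into one kernel-verified Lean document; each statement's English description precedes it below -/
import Mathlib

section
/- Let a ∈ (0,1), let L : (0,∞) → (0,∞) be measurable with 0 < L(t) ≤ M for all t and L(t) ≥ c₀ > 0 for all t ≥ t₀. Set J(x,τ) = x² · [∫₀^∞ (tτ²)²(1+tτ²)^{-5/2} t^{-a-1} L(t) e^{-x²/(2(1+tτ²))} dt] / [∫₀^∞ (1+tτ²)^{-1/2} t^{-a-1} L(t) e^{-x²/(2(1+tτ²))} dt]. If a ∈ [1/2, 1), then for every x ∈ ℝ and every τ ∈ (0,1), J(x,τ) ≤ C · e^{x²/2} τ^{2a} where C > 0 is a constant depending only on L and a (one may take C = 2KM(1+o(1)) with K^{-1} = ∫₀^∞ t^{-a-1}L(t)dt and the o(1) term depending only on τ and tending to 0 as τ → 0). -/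
open MeasureTheory Real Set Filter Topology

/-!
The numerator integrand is dominated by `M s^(a+1) e^{-x²/(2(1+ts))} / (1+ts)²` with `s = τ²`:
after `u = ts` the algebraic factor is `u^(1-a) (1+u)^(-5/2) ≤ (1+u)^(-2)`, which uses `a ≤ 1` for
`u^(1-a) ≤ (1+u)^(1-a)` and `a ≥ 1/2` for the exponent `-3/2 - a ≤ -2`. The dominating function has
the explicit antiderivative `2 e^{-x²/(2(1+ts))} / (x² s)`, so `x²` times the numerator is at most
`2 M τ^(2a)`. The denominator is at least its integral over `(t₀, t₀ + 1]`, where every factor is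
bounded below uniformly in `τ ∈ (0,1)`, the exponential by `e^{-x²/2}`.
-/

section Antiderivative

variable {c s : ℝ}

lemma hasDerivAt_const_mul_exp_neg_div_two_one_add_mul (hc : c ≠ 0) (hs : 0 < s) {t : ℝ} (ht : 0 ≤ t) :
    HasDerivAt (fun t => 2 / (c * s) * exp (-c / (2 * (1 + t * s))))
      (exp (-c / (2 * (1 + t * s))) / (1 + t * s) ^ 2) t := by
  have hpos : 0 < 1 + t * s := by positivity
  have hlin : HasDerivAt (fun t => 2 * (1 + t * s)) (2 * s) t := by
    simpa using ((hasDerivAt_mul_const s).const_add 1).const_mul 2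
  have hquot : HasDerivAt (fun t => -c / (2 * (1 + t * s)))
      ((0 * (2 * (1 + t * s)) - -c * (2 * s)) / (2 * (1 + t * s)) ^ 2) t :=
    (hasDerivAt_const t (-c)).div hlin (by positivity)
  refine (hquot.exp.const_mul (2 / (c * s))).congr_deriv ?_
  field_simp
  ring

lemma tendsto_const_mul_exp_neg_div_two_one_add_mul (hs : 0 < s) :
    Tendsto (fun t => 2 / (c * s) * exp (-c / (2 * (1 + t * s)))) atTop (𝓝 (2 / (c * s))) := by
  have hlin : Tendsto (fun t => 2 * (1 + t * s)) atTop atTop :=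
    (tendsto_atTop_add_const_left _ 1 (tendsto_id.atTop_mul_const hs)).const_mul_atTop two_pos
  have hquot : Tendsto (fun t => -c / (2 * (1 + t * s))) atTop (𝓝 0) := by
    simpa [div_eq_mul_inv] using hlin.inv_tendsto_atTop.const_mul (-c)
  simpa using ((continuous_exp.tendsto 0).comp hquot).const_mul (2 / (c * s))

lemma integrableOn_exp_neg_div_two_one_add_mul_div_sq (hc : c ≠ 0) (hs : 0 < s) :
    IntegrableOn (fun t => exp (-c / (2 * (1 + t * s))) / (1 + t * s) ^ 2) (Ioi 0) :=
  integrableOn_Ioi_deriv_of_nonneg' (fun _ ht => hasDerivAt_const_mul_exp_neg_div_two_one_add_mul hc hs ht)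
    (fun _ _ => by positivity) (tendsto_const_mul_exp_neg_div_two_one_add_mul hs)

lemma integral_exp_neg_div_two_one_add_mul_div_sq (hc : c ≠ 0) (hs : 0 < s) :
    ∫ t in Ioi (0:ℝ), exp (-c / (2 * (1 + t * s))) / (1 + t * s) ^ 2
      = 2 * (1 - exp (-c / 2)) / (c * s) := by
  rw [integral_Ioi_of_hasDerivAt_of_nonneg'
    (fun _ ht => hasDerivAt_const_mul_exp_neg_div_two_one_add_mul hc hs ht) (fun _ _ => by positivity)
    (tendsto_const_mul_exp_neg_div_two_one_add_mul hs)]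
  simp only [zero_mul, add_zero, mul_one]
  ring

end Antiderivative

section Kernel

variable {a : ℝ}

lemma rpow_one_sub_mul_one_add_rpow_le (ha₁ : 1 / 2 ≤ a) (ha₂ : a ≤ 1) {u : ℝ} (hu : 0 ≤ u) :
    u ^ (1 - a) * (1 + u) ^ (-(5:ℝ) / 2) ≤ (1 + u) ^ (-(2:ℝ)) :=
  calc u ^ (1 - a) * (1 + u) ^ (-(5:ℝ) / 2)
      ≤ (1 + u) ^ (1 - a) * (1 + u) ^ (-(5:ℝ) / 2) := by
        gcongr
        linarith
    _ = (1 + u) ^ (1 - a + -(5:ℝ) / 2) := (rpow_add (by linarith) _ _).symm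
    _ ≤ (1 + u) ^ (-(2:ℝ)) := rpow_le_rpow_of_exponent_le (by linarith) (by linarith)

lemma sq_mul_rpow_mul_rpow_le (ha₁ : 1 / 2 ≤ a) (ha₂ : a ≤ 1) {s t : ℝ} (hs : 0 < s)
    (ht : 0 < t) :
    (t * s) ^ 2 * (1 + t * s) ^ (-(5:ℝ) / 2) * t ^ (-a - 1) ≤ s ^ (a + 1) / (1 + t * s) ^ 2 := by
  have hu : 0 < t * s := by positivity
  have ht_rpow : t ^ (-a - 1) = (t * s) ^ (-a - 1) * s ^ (a + 1) := by
    rw [mul_rpow ht.le hs.le, mul_assoc, ← rpow_add hs, show -a - 1 + (a + 1) = 0 by ring,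
      rpow_zero, mul_one]
  have hsq : (t * s) ^ 2 * (t * s) ^ (-a - 1) = (t * s) ^ (1 - a) := by
    rw [← rpow_natCast, ← rpow_add hu]
    congr 1
    push_cast
    ring
  calc (t * s) ^ 2 * (1 + t * s) ^ (-(5:ℝ) / 2) * t ^ (-a - 1)
      = (t * s) ^ (1 - a) * (1 + t * s) ^ (-(5:ℝ) / 2) * s ^ (a + 1) := by
        rw [ht_rpow, ← hsq]
        ring
    _ ≤ (1 + t * s) ^ (-(2:ℝ)) * s ^ (a + 1) := by
        gcongr
        exact rpow_one_sub_mul_one_add_rpow_le ha₁ ha₂ hu.le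
    _ = s ^ (a + 1) / (1 + t * s) ^ 2 := by
        rw [rpow_neg (by positivity), div_eq_mul_inv, mul_comm]
        norm_cast

end Kernel

section Integrals

variable {a s M : ℝ} {L : ℝ → ℝ}

lemma sq_mul_integral_numerator_le (ha₁ : 1 / 2 ≤ a) (ha₂ : a ≤ 1) (hs : 0 < s)
    (hL : ∀ t ∈ Ioi (0:ℝ), 0 ≤ L t) (hM : ∀ t ∈ Ioi (0:ℝ), L t ≤ M) (x : ℝ) :
    x ^ 2 * ∫ t in Ioi (0:ℝ),
        (t * s) ^ 2 * (1 + t * s) ^ (-(5:ℝ) / 2) * t ^ (-a - 1) * L t *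
          exp (-x ^ 2 / (2 * (1 + t * s)))
      ≤ 2 * M * s ^ a := by
  have hM0 : 0 ≤ M := (hL 1 (mem_Ioi.2 one_pos)).trans (hM 1 (mem_Ioi.2 one_pos))
  rcases eq_or_ne x 0 with rfl | hx
  · simp only [ne_eq, OfNat.ofNat_ne_zero, not_false_eq_true, zero_pow, zero_mul]
    positivity
  have hx2 : x ^ 2 ≠ 0 := pow_ne_zero 2 hx
  have hdom : ∀ t ∈ Ioi (0:ℝ),
      (t * s) ^ 2 * (1 + t * s) ^ (-(5:ℝ) / 2) * t ^ (-a - 1) * L t *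
          exp (-x ^ 2 / (2 * (1 + t * s)))
        ≤ M * s ^ (a + 1) * (exp (-x ^ 2 / (2 * (1 + t * s))) / (1 + t * s) ^ 2) := by
    intro t ht
    have hkernel := sq_mul_rpow_mul_rpow_le ha₁ ha₂ hs ht
    calc _ ≤ s ^ (a + 1) / (1 + t * s) ^ 2 * M * exp (-x ^ 2 / (2 * (1 + t * s))) := by
          gcongr
          · exact hL t ht
          · exact hM t ht
      _ = _ := by ring
  have hint : ∫ t in Ioi (0:ℝ),
        (t * s) ^ 2 * (1 + t * s) ^ (-(5:ℝ) / 2) * t ^ (-a - 1) * L t *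
          exp (-x ^ 2 / (2 * (1 + t * s)))
      ≤ M * s ^ (a + 1) * (2 * (1 - exp (-x ^ 2 / 2)) / (x ^ 2 * s)) := by
    rw [← integral_exp_neg_div_two_one_add_mul_div_sq hx2 hs, ← integral_const_mul]
    refine integral_mono_of_nonneg ?_
      ((integrableOn_exp_neg_div_two_one_add_mul_div_sq hx2 hs).const_mul _) ?_
    · filter_upwards [ae_restrict_mem measurableSet_Ioi] with t ht
      have := hL t ht
      have ht' : 0 < t := ht
      positivity
    · filter_upwards [ae_restrict_mem measurableSet_Ioi] with t ht
      exact hdom t ht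
  calc _ ≤ x ^ 2 * (M * s ^ (a + 1) * (2 * (1 - exp (-x ^ 2 / 2)) / (x ^ 2 * s))) := by gcongr
    _ = 2 * M * s ^ a * (1 - exp (-x ^ 2 / 2)) := by
        rw [rpow_add hs, rpow_one]
        field_simp
    _ ≤ 2 * M * s ^ a := by
        have := exp_pos (-x ^ 2 / 2)
        nlinarith [show 0 ≤ 2 * M * s ^ a by positivity]

lemma denominator_integrand_ge {t₀ c₀ x t : ℝ} (ht₀ : 0 < t₀) (hc₀ : 0 ≤ c₀) (ha : -1 ≤ a)
    (hs₀ : 0 ≤ s) (hs₁ : s ≤ 1) (ht : t ∈ Ioc t₀ (t₀ + 1)) (hLt : c₀ ≤ L t) :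
    (2 + t₀) ^ (-(1:ℝ) / 2) * (t₀ + 1) ^ (-a - 1) * c₀ * exp (-x ^ 2 / 2)
      ≤ (1 + t * s) ^ (-(1:ℝ) / 2) * t ^ (-a - 1) * L t * exp (-x ^ 2 / (2 * (1 + t * s))) := by
  obtain ⟨ht₀t, ht₁⟩ := ht
  have htpos : 0 < t := ht₀.trans ht₀t
  have hts : t * s ≤ t := mul_le_of_le_one_right htpos.le hs₁
  have hv₀ : 1 ≤ 1 + t * s := by nlinarith
  have hv : (2 + t₀) ^ (-(1:ℝ) / 2) ≤ (1 + t * s) ^ (-(1:ℝ) / 2) :=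
    rpow_le_rpow_of_nonpos (by positivity) (by linarith) (by norm_num)
  have ht_rpow : (t₀ + 1) ^ (-a - 1) ≤ t ^ (-a - 1) :=
    rpow_le_rpow_of_nonpos htpos ht₁ (by linarith)
  have hexp : exp (-x ^ 2 / 2) ≤ exp (-x ^ 2 / (2 * (1 + t * s))) := by
    rw [exp_le_exp, neg_div, neg_div, neg_le_neg_iff]
    exact div_le_div_of_nonneg_left (sq_nonneg x) two_pos (by linarith)
  have hL0 : 0 ≤ L t := hc₀.trans hLt
  gcongr ?_ * ?_ * ?_ * ?_

lemma integral_denominator_ge {t₀ c₀ : ℝ} (ht₀ : 0 < t₀) (hc₀ : 0 ≤ c₀) (ha : -1 ≤ a)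
    (hs₀ : 0 ≤ s) (hs₁ : s ≤ 1) (hL : ∀ t ∈ Ioi (0:ℝ), 0 ≤ L t)
    (hlow : ∀ t ∈ Ioc t₀ (t₀ + 1), c₀ ≤ L t) (x : ℝ)
    (hint : IntegrableOn (fun t => (1 + t * s) ^ (-(1:ℝ) / 2) * t ^ (-a - 1) * L t *
      exp (-x ^ 2 / (2 * (1 + t * s)))) (Ioi 0)) :
    (2 + t₀) ^ (-(1:ℝ) / 2) * (t₀ + 1) ^ (-a - 1) * c₀ * exp (-x ^ 2 / 2)
      ≤ ∫ t in Ioi (0:ℝ), (1 + t * s) ^ (-(1:ℝ) / 2) * t ^ (-a - 1) * L t *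
          exp (-x ^ 2 / (2 * (1 + t * s))) := by
  have hsub : Ioc t₀ (t₀ + 1) ⊆ Ioi 0 := fun t ht => ht₀.trans ht.1
  have hvol : volume.real (Ioc t₀ (t₀ + 1)) = 1 := by simp
  calc _ = (2 + t₀) ^ (-(1:ℝ) / 2) * (t₀ + 1) ^ (-a - 1) * c₀ * exp (-x ^ 2 / 2)
          * volume.real (Ioc t₀ (t₀ + 1)) := by rw [hvol, mul_one]
    _ ≤ ∫ t in Ioc t₀ (t₀ + 1), (1 + t * s) ^ (-(1:ℝ) / 2) * t ^ (-a - 1) * L t *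
          exp (-x ^ 2 / (2 * (1 + t * s))) :=
        setIntegral_ge_of_const_le_real measurableSet_Ioc measure_Ioc_lt_top.ne
          (fun t ht => denominator_integrand_ge ht₀ hc₀ ha hs₀ hs₁ ht (hlow t ht))
          (hint.mono_set hsub)
    _ ≤ _ := by
        refine setIntegral_mono_set hint ?_ hsub.eventuallyLE
        filter_upwards [ae_restrict_mem measurableSet_Ioi] with t ht
        have := hL t ht
        have ht' : 0 < t := ht
        positivity

end Integrals

theorem stmt_1_general (a t₀ c₀ M : ℝ) (L : ℝ → ℝ)
    (ha : a ∈ Ico (1/2 : ℝ) 1)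
    (hLpos : ∀ t ∈ Ioi (0:ℝ), 0 < L t)
    (hM : ∀ t ∈ Ioi (0:ℝ), L t ≤ M)
    (ht₀ : 0 < t₀) (hc₀ : 0 < c₀)
    (hlow : ∀ t, t₀ ≤ t → c₀ ≤ L t) :
    ∃ C > 0, ∀ x : ℝ, ∀ τ ∈ Ioo (0:ℝ) 1,
      x ^ 2 *
        ((∫ t in Ioi (0:ℝ),
            (t * τ ^ 2) ^ 2 * (1 + t * τ ^ 2) ^ (-(5:ℝ)/2) * t ^ (-a - 1) * L t *
              Real.exp (-x ^ 2 / (2 * (1 + t * τ ^ 2)))) /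
         (∫ t in Ioi (0:ℝ),
            (1 + t * τ ^ 2) ^ (-(1:ℝ)/2) * t ^ (-a - 1) * L t *
              Real.exp (-x ^ 2 / (2 * (1 + t * τ ^ 2)))))
      ≤ C * Real.exp (x ^ 2 / 2) * τ ^ (2 * a) := by
  obtain ⟨ha₁, ha₂⟩ := ha
  have hL : ∀ t ∈ Ioi (0:ℝ), 0 ≤ L t := fun t ht => (hLpos t ht).le
  have hM₀ : 0 < M := (hLpos 1 (mem_Ioi.2 one_pos)).trans_le (hM 1 (mem_Ioi.2 one_pos))
  set κ := (2 + t₀) ^ (-(1:ℝ) / 2) * (t₀ + 1) ^ (-a - 1) * c₀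
  have hκ : 0 < κ := by positivity
  refine ⟨2 * M / κ, by positivity, fun x τ ⟨hτ₀, hτ₁⟩ => ?_⟩
  have hs₀ : 0 < τ ^ 2 := by positivity
  have hs₁ : τ ^ 2 ≤ 1 := pow_le_one₀ hτ₀.le hτ₁.le
  by_cases hint : IntegrableOn (fun t => (1 + t * τ ^ 2) ^ (-(1:ℝ) / 2) * t ^ (-a - 1) * L t *
      exp (-x ^ 2 / (2 * (1 + t * τ ^ 2)))) (Ioi 0)
  · have hden := integral_denominator_ge ht₀ hc₀.le (by linarith) hs₀.le hs₁ hL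
      (fun t ht => hlow t ht.1.le) x hint
    have hnum := sq_mul_integral_numerator_le ha₁ ha₂.le hs₀ hL hM x
    calc _ = x ^ 2 * (∫ t in Ioi (0:ℝ), (t * τ ^ 2) ^ 2 * (1 + t * τ ^ 2) ^ (-(5:ℝ) / 2) *
            t ^ (-a - 1) * L t * exp (-x ^ 2 / (2 * (1 + t * τ ^ 2)))) /
          ∫ t in Ioi (0:ℝ), (1 + t * τ ^ 2) ^ (-(1:ℝ) / 2) * t ^ (-a - 1) * L t *
            exp (-x ^ 2 / (2 * (1 + t * τ ^ 2))) := mul_div_assoc' _ _ _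
      _ ≤ 2 * M * (τ ^ 2) ^ a / (κ * exp (-x ^ 2 / 2)) :=
          div_le_div₀ (by positivity) hnum (by positivity) hden
      _ = 2 * M / κ * exp (x ^ 2 / 2) * τ ^ (2 * a) := by
          rw [← rpow_natCast, ← rpow_mul hτ₀.le, neg_div, exp_neg]
          field_simp
          norm_num
  · rw [integral_undef hint, div_zero, mul_zero]
    positivity

/-- the bound J(x,τ) ≤ C · e^{x²/2} τ^{2a} for a ∈ [1/2,1). -/
theorem stmt_1 (a t₀ c₀ M : ℝ) (L : ℝ → ℝ)
    (ha : a ∈ Ico (1/2 : ℝ) 1)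
    (hL : Measurable L) (hLpos : ∀ t ∈ Ioi (0:ℝ), 0 < L t)
    (hM : ∀ t ∈ Ioi (0:ℝ), L t ≤ M)
    (ht₀ : 0 < t₀) (hc₀ : 0 < c₀)
    (hlow : ∀ t, t₀ ≤ t → c₀ ≤ L t) :
    ∃ C > 0, ∀ x : ℝ, ∀ τ ∈ Ioo (0:ℝ) 1,
      x ^ 2 *
        ((∫ t in Ioi (0:ℝ),
            (t * τ ^ 2) ^ 2 * (1 + t * τ ^ 2) ^ (-(5:ℝ)/2) * t ^ (-a - 1) * L t *
              Real.exp (-x ^ 2 / (2 * (1 + t * τ ^ 2)))) /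
         (∫ t in Ioi (0:ℝ),
            (1 + t * τ ^ 2) ^ (-(1:ℝ)/2) * t ^ (-a - 1) * L t *
              Real.exp (-x ^ 2 / (2 * (1 + t * τ ^ 2)))))
      ≤ C * Real.exp (x ^ 2 / 2) * τ ^ (2 * a) :=
  stmt_1_general a t₀ c₀ M L ha hLpos hM ht₀ hc₀ hlow
end

section
/- With the substitution u = x²/(1+tτ²), for x ≠ 0, a > 0 and τ ∈ (0,1): ∫₀^∞ (tτ²)²(1+tτ²)^{-5/2} t^{-a-1} e^{-x²/(2(1+tτ²))} dt = τ^{2a} (x²)^{-a-1/2} ∫₀^{x²} (1-u/x²)^{1-a} u^{a-1/2} e^{-u/2} du. -/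
open MeasureTheory Real Set

private lemma stmt_2_aux (t τ a s : ℝ) (ht : 0 < t) (hτ0 : 0 < τ) (hs : 0 < s)
    (hc0 : (0:ℝ) < 1 + t * τ ^ 2) :
    (t * τ ^ 2) ^ 2 * (1 + t * τ ^ 2) ^ (-(5:ℝ)/2) * t ^ (-a - 1) *
      Real.exp (-s / (2 * (1 + t * τ ^ 2)))
    = τ ^ (2 * a) * s ^ (-a - 1/2) *
      (|((0 * (1 + t * τ ^ 2) - s * τ ^ 2) / (1 + t * τ ^ 2) ^ 2)| *
        ((1 - s / (1 + t * τ ^ 2) / s) ^ (1 - a) * (s / (1 + t * τ ^ 2)) ^ (a - 1/2) *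
          Real.exp (-(s / (1 + t * τ ^ 2)) / 2))) := by
  have hτa : τ ^ (2 * a) = (τ ^ 2) ^ a := by
    rw [← Real.rpow_natCast τ 2, ← Real.rpow_mul hτ0.le]
    norm_num
  rw [hτa]
  set c := 1 + t * τ ^ 2 with hcdef
  set p := τ ^ 2 with hpdef
  have hp : 0 < p := by positivity
  have habs : |((0 * c - s * p) / c ^ 2)| = s * p / c ^ 2 := by
    have h : (0 * c - s * p) / c ^ 2 = -(s * p / c ^ 2) := by ring
    rw [h, abs_neg, abs_of_pos (by positivity)]
  have harg1 : 1 - s / c / s = t * p / c := by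
    field_simp
    rw [hcdef]; ring
  have harg2 : -(s / c) / 2 = -s / (2 * c) := by
    rw [neg_div, neg_div, div_div, mul_comm c 2]
  rw [habs, harg1, harg2]
  rw [Real.div_rpow (by positivity) hc0.le, Real.div_rpow hs.le hc0.le,
      Real.mul_rpow ht.le hp.le]
  have hcc : ((c ^ 2 : ℝ))⁻¹ = c ^ (-(2:ℝ)) := by
    rw [← Real.rpow_natCast c 2, ← Real.rpow_neg hc0.le]
    norm_num
  have h2t : (t:ℝ) ^ (2:ℕ) * t ^ (-a - 1) = t ^ (1 - a) := by
    rw [← Real.rpow_natCast t 2, ← Real.rpow_add ht,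
      show ((2:ℕ):ℝ) + (-a - 1) = 1 - a from by push_cast; ring]
  have hp3 : p ^ a * p ^ (1 - a) * p = p ^ 2 := by
    rw [← Real.rpow_add hp, show a + (1 - a) = (1:ℝ) from by ring, Real.rpow_one, pow_two]
  have hs3 : s ^ (-a - 1/2) * s ^ (a - 1/2) * s = 1 := by
    rw [← Real.rpow_add hs, show -a - 1/2 + (a - 1/2) = (-1:ℝ) from by ring,
      Real.rpow_neg_one, inv_mul_cancel₀ hs.ne']
  have hc3 : c ^ (-(2:ℝ)) * c ^ (-(1 - a)) * c ^ (-(a - 1/2)) = c ^ (-(5:ℝ)/2) := by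
    rw [← Real.rpow_add hc0, ← Real.rpow_add hc0]
    congr 1
    ring
  have hcinv1 : (c ^ (1 - a))⁻¹ = c ^ (-(1 - a)) := by
    rw [← Real.rpow_neg hc0.le]
  have hcinv2 : (c ^ (a - 1/2))⁻¹ = c ^ (-(a - 1/2)) := by
    rw [← Real.rpow_neg hc0.le]
  calc (t * p) ^ 2 * c ^ (-(5:ℝ)/2) * t ^ (-a - 1) * Real.exp (-s / (2 * c))
      = (t ^ (2:ℕ) * t ^ (-a - 1)) * p ^ 2 * c ^ (-(5:ℝ)/2) * Real.exp (-s / (2 * c)) := by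
        ring
    _ = t ^ (1 - a) * p ^ 2 * c ^ (-(5:ℝ)/2) * Real.exp (-s / (2 * c)) := by rw [h2t]
    _ = t ^ (1 - a) * (p ^ a * p ^ (1 - a) * p) * (s ^ (-a - 1/2) * s ^ (a - 1/2) * s) *
          (c ^ (-(2:ℝ)) * c ^ (-(1 - a)) * c ^ (-(a - 1/2))) * Real.exp (-s / (2 * c)) := by
        rw [hp3, hs3, hc3]; ring
    _ = p ^ a * s ^ (-a - 1/2) *
          (s * p * (c ^ 2)⁻¹ *
            (t ^ (1 - a) * p ^ (1 - a) * (c ^ (1 - a))⁻¹ *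
              (s ^ (a - 1/2) * (c ^ (a - 1/2))⁻¹) * Real.exp (-s / (2 * c)))) := by
        rw [hcc, hcinv1, hcinv2]; ring
    _ = p ^ a * s ^ (-a - 1/2) *
          (s * p / c ^ 2 *
            (t ^ (1 - a) * p ^ (1 - a) / c ^ (1 - a) * (s ^ (a - 1/2) / c ^ (a - 1/2)) *
              Real.exp (-s / (2 * c)))) := by
        simp only [div_eq_mul_inv]

/-- change-of-variables identity u = x²/(1+tτ²). -/
theorem stmt_2 (x τ a : ℝ) (hx : x ≠ 0) (hτ : τ ∈ Ioo (0:ℝ) 1) (ha : 0 < a) :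
    (∫ t in Ioi (0:ℝ),
        (t * τ ^ 2) ^ 2 * (1 + t * τ ^ 2) ^ (-(5:ℝ)/2) * t ^ (-a - 1) *
          Real.exp (-x ^ 2 / (2 * (1 + t * τ ^ 2))))
    = τ ^ (2 * a) * (x ^ 2) ^ (-a - 1/2) *
        ∫ u in Ioo (0:ℝ) (x ^ 2),
          (1 - u / x ^ 2) ^ (1 - a) * u ^ (a - 1/2) * Real.exp (-u / 2) := by
  have hτ0 : 0 < τ := hτ.1
  have hs : 0 < x ^ 2 := by positivity
  set f : ℝ → ℝ := fun t => x ^ 2 / (1 + t * τ ^ 2) with hfdef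
  have hc : ∀ t : ℝ, 0 < t → 1 < 1 + t * τ ^ 2 := fun t ht => by
    have : 0 < t * τ ^ 2 := by positivity
    linarith
  have hderiv : ∀ t ∈ Ioi (0:ℝ),
      HasDerivWithinAt f ((0 * (1 + t * τ ^ 2) - x ^ 2 * τ ^ 2) / (1 + t * τ ^ 2) ^ 2) (Ioi 0) t := by
    intro t ht
    have hct := hc t ht
    exact (((hasDerivAt_const t (x^2)).div
      (((hasDerivAt_id t).mul_const (τ^2)).const_add 1) (by simp; linarith)).hasDerivWithinAt).congr_deriv
      (by simp only [id_eq]; ring)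
  have hanti : StrictAntiOn f (Ioi (0:ℝ)) := by
    intro t1 h1 t2 h2 h12
    have hc1 := hc t1 h1
    have hc2 := hc t2 h2
    apply div_lt_div_of_pos_left hs (by linarith)
    have : 0 < τ ^ 2 := by positivity
    nlinarith
  have hinj : InjOn f (Ioi (0:ℝ)) := hanti.injOn
  have himg : f '' Ioi (0:ℝ) = Ioo (0:ℝ) (x ^ 2) := by
    ext u
    constructor
    · rintro ⟨t, ht, rfl⟩
      have hct := hc t ht
      constructor
      · positivity
      · simp only [hfdef]
        rw [div_lt_iff₀ (by linarith)]
        nlinarith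
    · rintro ⟨hu0, hus⟩
      refine ⟨(x ^ 2 - u) / (u * τ ^ 2), ?_, ?_⟩
      · have : 0 < x ^ 2 - u := by linarith
        have : 0 < u * τ ^ 2 := by positivity
        exact div_pos (by linarith) this
      · simp only [hfdef]
        have h1 : u * τ ^ 2 ≠ 0 := by positivity
        have h2 : (1 + (x ^ 2 - u) / (u * τ ^ 2) * τ ^ 2) = x ^ 2 / u := by
          field_simp
          ring
        rw [h2]
        field_simp
  have key := integral_image_eq_integral_abs_deriv_smul measurableSet_Ioi hderiv hinj
      (fun u => (1 - u / x ^ 2) ^ (1 - a) * u ^ (a - 1/2) * Real.exp (-u / 2))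
  rw [himg] at key
  rw [key, ← integral_const_mul]
  apply setIntegral_congr_fun measurableSet_Ioi
  intro t ht
  simp only [smul_eq_mul, hfdef]
  have hct := hc t ht
  have hc0 : (0:ℝ) < 1 + t * τ ^ 2 := by linarith
  exact stmt_2_aux t τ a (x ^ 2) ht hτ0 hs hc0
end

section
/- Lower bound I_{5/2}: let L : (0,∞) → (0,∞) be nondecreasing and bounded by M, let a = 1/2, fix y > 0 and τ ∈ (0, 1/√2). Then I_{5/2} := ∫₀^∞ (tτ²)²(1+tτ²)^{-5/2} t^{-3/2} L(t) e^{tτ²y/(1+tτ²)} dt ≥ L(1)·τ·[ (τ/y)(e^{y/2} - e^{τ²y}) + (1/(√2 y))(e^{y} - e^{y/2}) ]. -/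
/-!
With `u = tτ²/(1 + tτ²)` one has `du/dt = τ²/(1 + tτ²)²`, and the integrand equals
`τ √u L(t) e^{uy} du/dt`. Dropping `t < 1/(1 - τ²)` (where `u < τ²`) and using `L(t) ≥ L(1)` for
`t ≥ 1`, it remains to bound `√u ≥ τ` up to `t = 1/τ²` (where `u = 1/2`) and `√u ≥ 1/√2` beyond;
the rest integrates exactly, since `e^{uy} du/dt` is the derivative of `e^{uy}/y` and `u → 1`.
-/

open MeasureTheory Real Set Filter Topology

noncomputable def fracSubst (c t : ℝ) : ℝ := t * c / (1 + t * c)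

noncomputable def substDensity (c y t : ℝ) : ℝ := exp (y * fracSubst c t) * (c / (1 + t * c) ^ 2)

section
variable {c t : ℝ}

theorem hasDerivAt_fracSubst (h : 1 + t * c ≠ 0) :
    HasDerivAt (fracSubst c) (c / (1 + t * c) ^ 2) t := by
  have hnum : HasDerivAt (fun t : ℝ => t * c) c t := by
    simpa using (hasDerivAt_id t).mul_const c
  exact (hnum.div (hnum.const_add 1) h).congr_deriv (by ring)

theorem tendsto_fracSubst_atTop (hc : c ≠ 0) : Tendsto (fracSubst c) atTop (𝓝 1) := by
  have h : Tendsto (fun t : ℝ => c / (t⁻¹ + c)) atTop (𝓝 (c / (0 + c))) :=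
    tendsto_const_nhds.div (tendsto_inv_atTop_zero.add tendsto_const_nhds) (by simpa using hc)
  rw [zero_add, div_self hc] at h
  refine h.congr' ?_
  filter_upwards [eventually_gt_atTop 0] with t ht
  simp only [fracSubst]
  field_simp

theorem fracSubst_le_one (hc : 0 ≤ c) (ht : 0 ≤ t) : fracSubst c t ≤ 1 :=
  div_le_one_of_le₀ (by linarith) (by positivity)

theorem monotoneOn_fracSubst (hc : 0 ≤ c) : MonotoneOn (fracSubst c) (Ici 0) := by
  intro a (ha : 0 ≤ a) b (hb : 0 ≤ b) hab
  rw [fracSubst, fracSubst, div_le_div_iff₀ (by positivity) (by positivity)]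
  nlinarith [mul_le_mul_of_nonneg_right hab hc]

theorem fracSubst_inv_one_sub (hc : c ≠ 1) : fracSubst c (1 - c)⁻¹ = c := by
  have : 1 - c ≠ 0 := sub_ne_zero.mpr hc.symm
  rw [fracSubst]; field_simp; ring

theorem fracSubst_inv (hc : c ≠ 0) : fracSubst c c⁻¹ = 1 / 2 := by
  rw [fracSubst, inv_mul_cancel₀ hc]; norm_num

end

section
variable {c y : ℝ}

theorem substDensity_nonneg (c y t : ℝ) (hc : 0 ≤ c) : 0 ≤ substDensity c y t := by
  unfold substDensity; positivity

theorem hasDerivAt_exp_fracSubst (hc : 0 ≤ c) (hy : y ≠ 0) {t : ℝ} (ht : 0 ≤ t) :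
    HasDerivAt (fun t => exp (y * fracSubst c t) / y) (substDensity c y t) t := by
  have h : 1 + t * c ≠ 0 := by positivity
  refine ((((hasDerivAt_fracSubst h).const_mul y).exp).div_const y).congr_deriv ?_
  rw [substDensity]; field_simp

variable {a : ℝ}

theorem integrableOn_substDensity (hc : 0 < c) (hy : y ≠ 0) (ha : 0 ≤ a) :
    IntegrableOn (substDensity c y) (Ioi a) :=
  integrableOn_Ioi_deriv_of_nonneg'
    (fun _ ht => hasDerivAt_exp_fracSubst hc.le hy (ha.trans ht))
    (fun t _ => substDensity_nonneg c y t hc.le)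
    (((tendsto_fracSubst_atTop hc.ne').const_mul y).rexp.div_const y)

theorem integral_Ioi_substDensity (hc : 0 < c) (hy : y ≠ 0) (ha : 0 ≤ a) :
    ∫ t in Ioi a, substDensity c y t = (exp y - exp (y * fracSubst c a)) / y := by
  rw [integral_Ioi_of_hasDerivAt_of_nonneg'
    (fun _ ht => hasDerivAt_exp_fracSubst hc.le hy (ha.trans ht))
    (fun t _ => substDensity_nonneg c y t hc.le)
    (((tendsto_fracSubst_atTop hc.ne').const_mul y).rexp.div_const y), mul_one, sub_div]

theorem integral_Ioc_substDensity (hc : 0 < c) (hy : y ≠ 0) (ha : 0 ≤ a) {b : ℝ} (hab : a ≤ b) :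
    ∫ t in Ioc a b, substDensity c y t =
      (exp (y * fracSubst c b) - exp (y * fracSubst c a)) / y := by
  rw [← intervalIntegral.integral_of_le hab,
    ← intervalIntegral.integral_Ioi_sub_Ioi (integrableOn_substDensity hc hy ha) hab,
    integral_Ioi_substDensity hc hy ha, integral_Ioi_substDensity hc hy (ha.trans hab)]
  ring

end

theorem rpow_neg_natCast_add_half {x : ℝ} (hx : 0 < x) (n : ℕ) :
    x ^ (-((n : ℝ) + 1 / 2)) = (x ^ n * √x)⁻¹ := by
  rw [rpow_neg hx.le, rpow_add hx, rpow_natCast, sqrt_eq_rpow]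

theorem integrand_eq_sqrt_mul_substDensity {c t : ℝ} (y ℓ : ℝ) (hc : 0 ≤ c) (ht : 0 < t) :
    (t * c) ^ 2 * (1 + t * c) ^ (-(5:ℝ)/2) * t ^ (-(3:ℝ)/2) * ℓ * exp (t * c * y / (1 + t * c)) =
      √c * (√(fracSubst c t) * ℓ * substDensity c y t) := by
  have hs : 0 < 1 + t * c := by positivity
  have h5 := rpow_neg_natCast_add_half hs 2
  have h3 := rpow_neg_natCast_add_half ht 1
  rw [show -((2:ℕ) + 1 / 2 : ℝ) = -(5:ℝ)/2 by norm_num] at h5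
  rw [show -((1:ℕ) + 1 / 2 : ℝ) = -(3:ℝ)/2 by norm_num] at h3
  have hst : 0 < √t := sqrt_pos.mpr ht
  have hss : 0 < √(1 + t * c) := sqrt_pos.mpr hs
  rw [h5, h3, substDensity, fracSubst, sqrt_div' _ hs.le, sqrt_mul ht.le,
    show t * c * y / (1 + t * c) = y * (t * c / (1 + t * c)) by ring]
  field_simp
  rw [sq_sqrt hc, sq_sqrt ht.le]
  ring

section
variable {c y : ℝ} {L : ℝ → ℝ}

theorem integrableOn_sqrt_fracSubst_mul_substDensity {M : ℝ} (hc : 0 < c) (hy : y ≠ 0)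
    (hL : Measurable L) (hM : ∀ t ∈ Ioi 0, |L t| ≤ M) :
    IntegrableOn (fun t => √(fracSubst c t) * L t * substDensity c y t) (Ioi 0) := by
  refine (integrableOn_substDensity hc hy le_rfl).bdd_mul (c := M) ?_ ?_
  · have hu : Measurable (fracSubst c) := by unfold fracSubst; fun_prop
    exact (hu.sqrt.mul hL).aestronglyMeasurable
  · rw [ae_restrict_iff' measurableSet_Ioi]
    refine ae_of_all _ fun t (ht : 0 < t) => ?_
    have hu : √(fracSubst c t) ≤ 1 := sqrt_le_one.mpr (fracSubst_le_one hc.le ht.le)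
    rw [norm_mul, norm_of_nonneg (sqrt_nonneg _), norm_eq_abs]
    nlinarith [abs_nonneg (L t), sqrt_nonneg (fracSubst c t), hM t ht]

theorem mul_setIntegral_substDensity_le {s : Set ℝ} {r : ℝ} (hc : 0 ≤ c) (hL : Monotone L)
    (hL1 : 0 ≤ L 1) (hs : MeasurableSet s)
    (hrs : ∀ t ∈ s, 1 ≤ t ∧ r ≤ √(fracSubst c t))
    (hg : IntegrableOn (substDensity c y) s)
    (hF : IntegrableOn (fun t => √(fracSubst c t) * L t * substDensity c y t) s) :
    L 1 * r * ∫ t in s, substDensity c y t ≤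
      ∫ t in s, √(fracSubst c t) * L t * substDensity c y t := by
  rw [← integral_const_mul]
  refine setIntegral_mono_on (hg.const_mul _) hF hs fun t ht => ?_
  obtain ⟨h1t, hrt⟩ := hrs t ht
  refine mul_le_mul_of_nonneg_right ?_ (substDensity_nonneg c y t hc)
  rw [mul_comm (L 1)]
  exact mul_le_mul hrt (hL h1t) hL1 (sqrt_nonneg _)

theorem le_setIntegral_Ioi_sqrt_fracSubst_mul_substDensity (hc0 : 0 < c)
    (hc : c ≤ 1 / 2) (hy : y ≠ 0) (hL : Monotone L) (hL1 : 0 ≤ L 1)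
    (hF : IntegrableOn (fun t => √(fracSubst c t) * L t * substDensity c y t) (Ioi 0)) :
    L 1 * (√c * ((exp (y / 2) - exp (c * y)) / y) + √(1 / 2) * ((exp y - exp (y / 2)) / y)) ≤
      ∫ t in Ioi (1 - c)⁻¹, √(fracSubst c t) * L t * substDensity c y t := by
  set t₁ := (1 - c)⁻¹
  set t₂ := c⁻¹
  have h1t₁ : 1 ≤ t₁ := (one_le_inv₀ (by linarith)).mpr (by linarith)
  have ht₁0 : 0 < t₁ := by linarith
  have ht₁₂ : t₁ ≤ t₂ := inv_anti₀ hc0 (by linarith)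
  have hsqrt_le {a t : ℝ} (ha : 0 ≤ a) (hat : a ≤ t) :
      √(fracSubst c a) ≤ √(fracSubst c t) :=
    sqrt_le_sqrt (monotoneOn_fracSubst hc0.le ha (ha.trans hat) hat)
  have hA := mul_setIntegral_substDensity_le (y := y) (s := Ioc t₁ t₂) (r := √c) hc0.le hL hL1
    measurableSet_Ioc (fun t ht => ⟨h1t₁.trans ht.1.le, by
      simpa [t₁, fracSubst_inv_one_sub (by linarith : c < 1).ne] using hsqrt_le ht₁0.le ht.1.le⟩)
    ((integrableOn_substDensity hc0 hy ht₁0.le).mono_set Ioc_subset_Ioi_self)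
    (hF.mono_set fun t ht => ht₁0.trans ht.1)
  have hB := mul_setIntegral_substDensity_le (y := y) (s := Ioi t₂) (r := √(1 / 2)) hc0.le hL hL1
    measurableSet_Ioi (fun t ht => ⟨(h1t₁.trans ht₁₂).trans ht.le, by
      simpa [t₂, fracSubst_inv hc0.ne'] using hsqrt_le (by positivity) ht.le⟩)
    (integrableOn_substDensity hc0 hy (by positivity))
    (hF.mono_set (Ioi_subset_Ioi (by positivity)))
  rw [integral_Ioc_substDensity hc0 hy ht₁0.le ht₁₂, fracSubst_inv hc0.ne',
    fracSubst_inv_one_sub (by linarith : c < 1).ne] at hA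
  rw [integral_Ioi_substDensity hc0 hy (by positivity), fracSubst_inv hc0.ne'] at hB
  rw [← Ioc_union_Ioi_eq_Ioi ht₁₂, setIntegral_union (Ioc_disjoint_Ioi le_rfl) measurableSet_Ioi
    (hF.mono_set fun t ht => ht₁0.trans ht.1) (hF.mono_set (Ioi_subset_Ioi (by positivity)))]
  rw [mul_one_div, mul_comm y c] at hA
  rw [mul_one_div] at hB
  linarith

end

/-- lower bound on I_{5/2} (Lemma A.5, a = 1/2). -/
theorem stmt_6 (y τ M : ℝ) (L : ℝ → ℝ)
    (hLmono : Monotone L) (hLpos : ∀ t ∈ Ioi (0:ℝ), 0 < L t)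
    (hM : ∀ t ∈ Ioi (0:ℝ), L t ≤ M)
    (hy : 0 < y) (hτ : τ ∈ Ioo (0:ℝ) (1 / Real.sqrt 2)) :
    (∫ t in Ioi (0:ℝ),
        (t * τ ^ 2) ^ 2 * (1 + t * τ ^ 2) ^ (-(5:ℝ)/2) * t ^ (-(3:ℝ)/2) * L t *
          Real.exp (t * τ ^ 2 * y / (1 + t * τ ^ 2)))
    ≥ L 1 * τ *
        ((τ / y) * (Real.exp (y / 2) - Real.exp (τ ^ 2 * y)) +
          (1 / (Real.sqrt 2 * y)) * (Real.exp y - Real.exp (y / 2))) := by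
  obtain ⟨hτ0, hτ⟩ := hτ
  have hc0 : 0 < τ ^ 2 := by positivity
  have hc : τ ^ 2 ≤ 1 / 2 := by
    have := (lt_div_iff₀ (by positivity : (0:ℝ) < √2)).mp hτ
    nlinarith [sq_sqrt (show (0:ℝ) ≤ 2 by norm_num), sqrt_nonneg 2]
  set F := fun t => √(fracSubst (τ ^ 2) t) * L t * substDensity (τ ^ 2) y t
  have hF : IntegrableOn F (Ioi 0) :=
    integrableOn_sqrt_fracSubst_mul_substDensity hc0 hy.ne' hLmono.measurable
      fun t ht => (abs_of_pos (hLpos t ht)).trans_le (hM t ht)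
  have hF0 : ∀ t ∈ Ioi (0:ℝ), 0 ≤ F t := fun t ht =>
    mul_nonneg (mul_nonneg (sqrt_nonneg _) (hLpos t ht).le) (substDensity_nonneg _ _ _ hc0.le)
  have hI : ∫ t in Ioi (0:ℝ),
        (t * τ ^ 2) ^ 2 * (1 + t * τ ^ 2) ^ (-(5:ℝ)/2) * t ^ (-(3:ℝ)/2) * L t *
          Real.exp (t * τ ^ 2 * y / (1 + t * τ ^ 2)) = τ * ∫ t in Ioi 0, F t := by
    rw [← integral_const_mul]
    refine setIntegral_congr_fun measurableSet_Ioi fun t ht => ?_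
    rw [integrand_eq_sqrt_mul_substDensity y (L t) hc0.le ht, sqrt_sq hτ0.le]
  have hbound := le_setIntegral_Ioi_sqrt_fracSubst_mul_substDensity hc0 hc hy.ne'
    hLmono (hLpos 1 (mem_Ioi.mpr one_pos)).le hF
  rw [sqrt_sq hτ0.le, sqrt_div' _ zero_le_two, sqrt_one] at hbound
  rw [hI, ge_iff_le]
  calc L 1 * τ * ((τ / y) * (exp (y / 2) - exp (τ ^ 2 * y)) +
          (1 / (√2 * y)) * (exp y - exp (y / 2)))
      = τ * (L 1 * (τ * ((exp (y / 2) - exp (τ ^ 2 * y)) / y) +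
          1 / √2 * ((exp y - exp (y / 2)) / y))) := by ring
    _ ≤ τ * ∫ t in Ioi (1 - τ ^ 2)⁻¹, F t := by gcongr
    _ ≤ τ * ∫ t in Ioi 0, F t :=
        mul_le_mul_of_nonneg_left (setIntegral_mono_set hF
          ((ae_restrict_iff' measurableSet_Ioi).2 (ae_of_all _ hF0))
          (Ioi_subset_Ioi (inv_nonneg.mpr (by linarith))).eventuallyLE) hτ0.le
end

section
/- Tail robustness: fix τ ∈ (0,1), a ∈ (0,1), and L : (0,∞) → (0,∞) measurable with c₀ ≤ L ≤ M on [t₀,∞) and L ≤ M everywhere. Let T_τ(x) = x(1 - E(κ|x,τ)) be the posterior mean with E(κ|x,τ) = ∫₀¹ κ^{a+1/2}(1-κ)^{-a-1} L((1/τ²)(1/κ - 1)) e^{-κx²/2} dκ / ∫₀¹ κ^{a-1/2}(1-κ)^{-a-1} L((1/τ²)(1/κ - 1)) e^{-κx²/2} dκ. Then lim_{|x| → ∞} |T_τ(x) - x| = 0. -/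
open MeasureTheory Real Set Filter Asymptotics

/-!
Write `s = x² / 2`. Then `E(κ | x)` is the ratio of `∫ κ w(κ) e^{-sκ}` to `∫ w(κ) e^{-sκ}` over
`(0,1)`, where the weight `w` is squeezed between two multiples of `κ^(b-1)`, `b = a + 1/2`, on an
interval `(0, δ)`: from below because `L ≥ c₀` at large `λ²`, from above because `L ≤ M`.
Restricting the denominator to `κ < 1/s`, where `e^{-sκ} ≥ e^{-1}`, bounds it below by a multiple
of `s^(-b)`. Splitting the numerator at `δ`, the part over `(0, δ)` is at most a Gamma integral
`C Γ(b+1) s^(-b-1)` and the rest is exponentially small in `s`. Hence `E(κ | x) = O(1/x²)`.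
-/

lemma integral_Ioo_rpow_sub_one {b m : ℝ} (hb : 0 < b) (hm : 0 ≤ m) :
    ∫ k in Ioo 0 m, k ^ (b - 1) = m ^ b / b := by
  rw [← integral_Ioc_eq_integral_Ioo, ← intervalIntegral.integral_of_le hm,
    integral_rpow (Or.inl (by linarith)), sub_add_cancel, zero_rpow hb.ne', sub_zero]

lemma integrableOn_rpow_mul_exp_neg_mul_Ioi {b s : ℝ} (hb : -1 < b) (hs : 0 < s) :
    IntegrableOn (fun k => k ^ b * exp (-(s * k))) (Ioi 0) := by
  refine Integrable.of_integral_ne_zero ?_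
  rw [← add_sub_cancel_right b 1, integral_rpow_mul_exp_neg_mul_Ioi (by linarith) hs]
  exact (mul_pos (by positivity) (Gamma_pos_of_pos (by linarith))).ne'

lemma integral_Ioo_rpow_mul_exp_neg_mul_le {b s δ : ℝ} (hb : -1 < b) (hs : 0 < s) :
    ∫ k in Ioo 0 δ, k ^ b * exp (-(s * k)) ≤ Gamma (b + 1) / s ^ (b + 1) := by
  have hΓ := integral_rpow_mul_exp_neg_mul_Ioi (a := b + 1) (by linarith) hs
  rw [add_sub_cancel_right, one_div, inv_rpow hs.le, inv_mul_eq_div] at hΓ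
  rw [← hΓ]
  refine setIntegral_mono_set (integrableOn_rpow_mul_exp_neg_mul_Ioi hb hs) ?_
    Ioo_subset_Ioi_self.eventuallyLE
  filter_upwards [ae_restrict_mem measurableSet_Ioi] with k (hk : 0 < k)
  positivity

section ShrinkageMean

variable {w : ℝ → ℝ} {b c C δ s : ℝ}

lemma integrableOn_of_integrableOn_mul_exp_neg
    (h : IntegrableOn (fun k => w k * exp (-(s * k))) (Ioo 0 1)) : IntegrableOn w (Ioo 0 1) :=
  (h.mul_continuousOn_of_subset (g' := fun k => exp (s * k)) (by fun_prop) measurableSet_Ioo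
    isCompact_Icc Ioo_subset_Icc_self).congr_fun
    (fun k _ => by simp only [mul_assoc, ← exp_add, neg_add_cancel, exp_zero, mul_one])
    measurableSet_Ioo

lemma integrableOn_mul_mul_exp_neg {A : Set ℝ} {p q : ℝ} (hw : IntegrableOn w A)
    (hA : MeasurableSet A) (hA1 : A ⊆ Icc p q) :
    IntegrableOn (fun k => k * w k * exp (-(s * k))) A :=
  (hw.mul_continuousOn_of_subset (g' := fun k => k * exp (-(s * k))) (by fun_prop) hA
    isCompact_Icc hA1).congr_fun (fun k _ => by ring) hA

lemma le_integral_mul_exp_neg (hw : IntegrableOn w (Ioo 0 1))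
    (hw0 : ∀ k ∈ Ioo (0:ℝ) 1, 0 ≤ w k) (hb : 0 < b) (hδ : 0 < δ) (hδ1 : δ ≤ 1)
    (hlow : ∀ k ∈ Ioo 0 δ, c * k ^ (b - 1) ≤ w k) (hs : δ⁻¹ ≤ s) :
    c * exp (-1) / (b * s ^ b) ≤ ∫ k in Ioo 0 1, w k * exp (-(s * k)) := by
  have hs0 : 0 < s := (inv_pos.2 hδ).trans_le hs
  have hsδ : s⁻¹ ≤ δ := inv_le_of_inv_le₀ hδ hs
  have hsub : Ioo 0 s⁻¹ ⊆ Ioo (0:ℝ) 1 := Ioo_subset_Ioo_right (hsδ.trans hδ1)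
  have hwexp : IntegrableOn (fun k => w k * exp (-(s * k))) (Ioo 0 1) :=
    hw.mul_continuousOn_of_subset (by fun_prop) measurableSet_Ioo isCompact_Icc
      Ioo_subset_Icc_self
  calc c * exp (-1) / (b * s ^ b) = ∫ k in Ioo 0 s⁻¹, c * exp (-1) * k ^ (b - 1) := by
        rw [integral_const_mul, integral_Ioo_rpow_sub_one hb (by positivity), inv_rpow hs0.le]
        field_simp
    _ ≤ ∫ k in Ioo 0 s⁻¹, w k * exp (-(s * k)) := by
        refine setIntegral_mono_on ?_ (hwexp.mono_set hsub) measurableSet_Ioo fun k hk => ?_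
        · exact ((intervalIntegral.integrableOn_Ioo_rpow_iff (by positivity)).2
            (by linarith)).const_mul _
        have hexp : exp (-1) ≤ exp (-(s * k)) := by
          gcongr
          have := mul_lt_mul_of_pos_left hk.2 hs0
          rw [mul_inv_cancel₀ hs0.ne'] at this
          linarith
        calc c * exp (-1) * k ^ (b - 1) = c * k ^ (b - 1) * exp (-1) := by ring
          _ ≤ w k * exp (-(s * k)) :=
            mul_le_mul (hlow k ⟨hk.1, hk.2.trans_le hsδ⟩) hexp (exp_pos _).le (hw0 k (hsub hk))
    _ ≤ ∫ k in Ioo 0 1, w k * exp (-(s * k)) := by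
        refine setIntegral_mono_set hwexp ?_ hsub.eventuallyLE
        filter_upwards [ae_restrict_mem measurableSet_Ioo] with k hk
        exact mul_nonneg (hw0 k hk) (exp_pos _).le

lemma integral_Ioo_mul_mul_exp_neg_le (hw : IntegrableOn w (Ioo 0 δ))
    (hw0 : ∀ k ∈ Ioo 0 δ, 0 ≤ w k) (hb : -1 < b) (hδ : 0 < δ)
    (hup : ∀ k ∈ Ioo 0 δ, w k ≤ C * k ^ (b - 1)) (hs : 0 < s) :
    ∫ k in Ioo 0 δ, k * w k * exp (-(s * k)) ≤ C * Gamma (b + 1) / s ^ (b + 1) := by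
  have hmid : δ / 2 ∈ Ioo 0 δ := ⟨by positivity, by linarith⟩
  have hC : 0 ≤ C :=
    nonneg_of_mul_nonneg_left ((hw0 _ hmid).trans (hup _ hmid)) (rpow_pos_of_pos hmid.1 _)
  calc ∫ k in Ioo 0 δ, k * w k * exp (-(s * k))
      ≤ ∫ k in Ioo 0 δ, C * (k ^ b * exp (-(s * k))) := by
        refine setIntegral_mono_on ?_ ?_ measurableSet_Ioo fun k hk => ?_
        · exact integrableOn_mul_mul_exp_neg hw measurableSet_Ioo Ioo_subset_Icc_self
        · exact ((integrableOn_rpow_mul_exp_neg_mul_Ioi hb hs).mono_set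
            Ioo_subset_Ioi_self).const_mul C
        have hkb : k * (C * k ^ (b - 1)) = C * k ^ b := by
          rw [mul_left_comm, mul_comm k, ← rpow_add_one hk.1.ne', sub_add_cancel]
        calc k * w k * exp (-(s * k)) ≤ k * (C * k ^ (b - 1)) * exp (-(s * k)) := by
              gcongr
              · exact hk.1.le
              · exact hup k hk
          _ = C * (k ^ b * exp (-(s * k))) := by rw [hkb, mul_assoc]
    _ ≤ C * Gamma (b + 1) / s ^ (b + 1) := by
        rw [integral_const_mul, mul_div_assoc]
        exact mul_le_mul_of_nonneg_left (integral_Ioo_rpow_mul_exp_neg_mul_le hb hs) hC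

lemma integral_Ico_mul_mul_exp_neg_le (hw : IntegrableOn w (Ico δ 1))
    (hw0 : ∀ k ∈ Ico δ 1, 0 ≤ w k) (hs : 0 ≤ s) :
    ∫ k in Ico δ 1, k * w k * exp (-(s * k)) ≤ (∫ k in Ico δ 1, w k) * exp (-(s * δ)) := by
  rw [← integral_mul_const]
  refine setIntegral_mono_on ?_ (hw.mul_const _) measurableSet_Ico fun k hk => ?_
  · exact integrableOn_mul_mul_exp_neg hw measurableSet_Ico Ico_subset_Icc_self
  have hw0k := hw0 k hk
  calc k * w k * exp (-(s * k)) ≤ 1 * w k * exp (-(s * δ)) := by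
        gcongr
        · exact hk.2.le
        · exact hk.1
    _ = w k * exp (-(s * δ)) := by rw [one_mul]

lemma integral_mul_mul_exp_neg_le (hw : IntegrableOn w (Ioo 0 1))
    (hw0 : ∀ k ∈ Ioo (0:ℝ) 1, 0 ≤ w k) (hb : -1 < b) (hδ : 0 < δ) (hδ1 : δ ≤ 1)
    (hup : ∀ k ∈ Ioo 0 δ, w k ≤ C * k ^ (b - 1)) (hs : 0 < s) :
    ∫ k in Ioo 0 1, k * w k * exp (-(s * k)) ≤
      C * Gamma (b + 1) / s ^ (b + 1) + (∫ k in Ico δ 1, w k) * exp (-(s * δ)) := by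
  have hsplit := Ioo_union_Ico_eq_Ioo hδ hδ1
  have hhead : Ioo 0 δ ⊆ Ioo (0:ℝ) 1 := hsplit ▸ subset_union_left
  have htail : Ico δ 1 ⊆ Ioo (0:ℝ) 1 := hsplit ▸ subset_union_right
  have hkw := integrableOn_mul_mul_exp_neg (s := s) hw measurableSet_Ioo Ioo_subset_Icc_self
  rw [← hsplit, setIntegral_union (Ico_disjoint_Ico_same.mono_left Ioo_subset_Ico_self)
    measurableSet_Ico (hkw.mono_set hhead) (hkw.mono_set htail)]
  exact add_le_add
    (integral_Ioo_mul_mul_exp_neg_le (hw.mono_set hhead) (fun k hk => hw0 k (hhead hk)) hb hδ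
      hup hs)
    (integral_Ico_mul_mul_exp_neg_le (hw.mono_set htail) (fun k hk => hw0 k (htail hk)) hs.le)

/-- The posterior mean `E(κ | x)` of a shrinkage coefficient `κ ∈ (0,1)` whose posterior density
is proportional to `w κ * exp (-κ x² / 2)`, written as a function of `s = x² / 2`. -/
noncomputable def shrinkageMean (w : ℝ → ℝ) (s : ℝ) : ℝ :=
  (∫ k in Ioo 0 1, k * w k * exp (-(s * k))) / ∫ k in Ioo 0 1, w k * exp (-(s * k))

lemma shrinkageMean_nonneg (hw0 : ∀ k ∈ Ioo (0:ℝ) 1, 0 ≤ w k) : 0 ≤ shrinkageMean w s :=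
  div_nonneg
    (setIntegral_nonneg measurableSet_Ioo fun k hk => by have := hw0 k hk; have := hk.1; positivity)
    (setIntegral_nonneg measurableSet_Ioo fun k hk => by have := hw0 k hk; positivity)

lemma shrinkageMean_of_not_integrableOn (hw : ¬IntegrableOn w (Ioo 0 1)) :
    shrinkageMean w s = 0 := by
  rw [shrinkageMean, integral_undef fun h => hw (integrableOn_of_integrableOn_mul_exp_neg h),
    div_zero]

lemma mul_shrinkageMean_le (hw : IntegrableOn w (Ioo 0 1))
    (hw0 : ∀ k ∈ Ioo (0:ℝ) 1, 0 ≤ w k) (hb : 0 < b) (hc : 0 < c) (hδ : 0 < δ) (hδ1 : δ ≤ 1)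
    (hlow : ∀ k ∈ Ioo 0 δ, c * k ^ (b - 1) ≤ w k)
    (hup : ∀ k ∈ Ioo 0 δ, w k ≤ C * k ^ (b - 1)) (hs : δ⁻¹ ≤ s) :
    s * shrinkageMean w s ≤ b * exp 1 / c *
      (C * Gamma (b + 1) + (∫ k in Ico δ 1, w k) * (s ^ (b + 1) * exp (-δ * s))) := by
  have hs0 : 0 < s := (inv_pos.2 hδ).trans_le hs
  have hN := integral_mul_mul_exp_neg_le hw hw0 (by linarith) hδ hδ1 hup hs0
  have hN0 : 0 ≤ ∫ k in Ioo 0 1, k * w k * exp (-(s * k)) :=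
    setIntegral_nonneg measurableSet_Ioo fun k hk => by have := hw0 k hk; have := hk.1; positivity
  have hD := le_integral_mul_exp_neg hw hw0 hb hδ hδ1 hlow hs
  have hD0 : 0 < c * exp (-1) / (b * s ^ b) := by positivity
  calc s * shrinkageMean w s
      ≤ s * ((∫ k in Ioo 0 1, k * w k * exp (-(s * k))) / (c * exp (-1) / (b * s ^ b))) := by
        unfold shrinkageMean; gcongr
    _ ≤ s * ((C * Gamma (b + 1) / s ^ (b + 1) + (∫ k in Ico δ 1, w k) * exp (-(s * δ))) /
          (c * exp (-1) / (b * s ^ b))) := by gcongr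
    _ = _ := by
        rw [rpow_add_one hs0.ne', neg_mul, mul_comm δ s]
        simp only [exp_neg]
        field_simp

theorem shrinkageMean_isBigO_inv (hw0 : ∀ k ∈ Ioo (0:ℝ) 1, 0 ≤ w k)
    (hb : 0 < b) (hc : 0 < c) (hδ : 0 < δ) (hδ1 : δ ≤ 1)
    (hlow : ∀ k ∈ Ioo 0 δ, c * k ^ (b - 1) ≤ w k)
    (hup : ∀ k ∈ Ioo 0 δ, w k ≤ C * k ^ (b - 1)) :
    shrinkageMean w =O[atTop] fun s => s⁻¹ := by
  by_cases hw : IntegrableOn w (Ioo 0 1)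
  swap
  · exact (isBigO_zero _ _).congr_left fun s => (shrinkageMean_of_not_integrableOn hw).symm
  have hG : 0 ≤ ∫ k in Ico δ 1, w k := setIntegral_nonneg measurableSet_Ico fun k hk =>
    hw0 k ⟨hδ.trans_le hk.1, hk.2⟩
  have htail : ∀ᶠ s in atTop, s ^ (b + 1) * exp (-δ * s) ≤ 1 :=
    (tendsto_rpow_mul_exp_neg_mul_atTop_nhds_zero _ _ hδ).eventually (ge_mem_nhds one_pos)
  refine IsBigO.of_bound (b * exp 1 / c * (C * Gamma (b + 1) + ∫ k in Ico δ 1, w k)) ?_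
  filter_upwards [htail, eventually_ge_atTop δ⁻¹] with s htail hs
  have hs0 : 0 < s := (inv_pos.2 hδ).trans_le hs
  rw [norm_of_nonneg (shrinkageMean_nonneg hw0), norm_inv, norm_of_nonneg hs0.le,
    ← div_eq_mul_inv, le_div_iff₀' hs0]
  calc s * shrinkageMean w s
      ≤ b * exp 1 / c *
          (C * Gamma (b + 1) + (∫ k in Ico δ 1, w k) * (s ^ (b + 1) * exp (-δ * s))) :=
        mul_shrinkageMean_le hw hw0 hb hc hδ hδ1 hlow hup hs
    _ ≤ b * exp 1 / c * (C * Gamma (b + 1) + ∫ k in Ico δ 1, w k) := by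
        gcongr
        exact mul_le_of_le_one_right hG htail

end ShrinkageMean

theorem tendsto_mul_comp_half_sq_cocompact {f : ℝ → ℝ} (hf : f =O[atTop] fun s => s⁻¹) :
    Tendsto (fun x => x * f (x ^ 2 / 2)) (cocompact ℝ) (nhds 0) := by
  have hsq : Tendsto (fun x : ℝ => x ^ 2 / 2) (cocompact ℝ) atTop :=
    (((tendsto_pow_atTop two_ne_zero).comp tendsto_norm_cocompact_atTop).atTop_div_const
      two_pos).congr fun x => by simp
  have h := (isBigO_refl (fun x : ℝ => x) (cocompact ℝ)).mul (hf.comp_tendsto hsq)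
  refine h.trans_tendsto ?_
  have hinv := (tendsto_inv₀_cobounded (α := ℝ)).const_mul 2
  rw [Metric.cobounded_eq_cocompact, mul_zero] at hinv
  refine hinv.congr fun x => ?_
  rcases eq_or_ne x 0 with rfl | hx
  · simp
  · simp only [Function.comp_apply]
    field_simp

/-- `λ²` in terms of the shrinkage coefficient `κ = 1 / (1 + τ² λ²)`. -/
noncomputable def lambdaSq (τ k : ℝ) : ℝ := 1 / τ ^ 2 * (1 / k - 1)

lemma lambdaSq_pos {τ k : ℝ} (hτ : τ ≠ 0) (hk : k ∈ Ioo (0:ℝ) 1) :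
    0 < lambdaSq τ k := by
  have : 1 < 1 / k := by rw [lt_div_iff₀ hk.1]; linarith [hk.2]
  unfold lambdaSq
  have := sub_pos.2 this
  positivity

lemma inv_one_add_sq_mul_lt_one {τ t : ℝ} (hτ : τ ≠ 0) (ht : 0 < t) : (1 + τ ^ 2 * t)⁻¹ < 1 :=
  inv_lt_one_of_one_lt₀ (lt_add_of_pos_right 1 (by positivity))

lemma le_lambdaSq {τ k t : ℝ} (hτ : τ ≠ 0) (hk0 : 0 < k) (hk : k ≤ (1 + τ ^ 2 * t)⁻¹) :
    t ≤ lambdaSq τ k := by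
  have hpos : 0 < 1 + τ ^ 2 * t := inv_pos.1 (hk0.trans_le hk)
  have h1 : 1 + τ ^ 2 * t ≤ 1 / k := by rw [one_div]; exact (le_inv_comm₀ hk0 hpos).1 hk
  unfold lambdaSq
  rw [div_mul_eq_mul_div, one_mul, le_div_iff₀ (by positivity)]
  linarith

/-- Prior density of `κ = 1 / (1 + τ² λ²)` under `π(λ²) ∝ (λ²)^(-a-1) L(λ²)`, times the
factor `κ^(1/2)` of the likelihood of `x` given `κ`, up to constants. -/
noncomputable def shrinkageWeight (a τ : ℝ) (L : ℝ → ℝ) (k : ℝ) : ℝ :=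
  k ^ (a - 1/2) * (1 - k) ^ (-a - 1) * L (lambdaSq τ k)

section ShrinkageWeight

variable {a τ δ : ℝ} {L : ℝ → ℝ}

lemma shrinkageWeight_nonneg (hτ : τ ≠ 0) (hL : ∀ t ∈ Ioi (0:ℝ), 0 < L t) {k : ℝ}
    (hk : k ∈ Ioo (0:ℝ) 1) : 0 ≤ shrinkageWeight a τ L k := by
  have := hL _ (lambdaSq_pos hτ hk)
  have := sub_pos.2 hk.2
  have := hk.1
  unfold shrinkageWeight
  positivity

lemma le_shrinkageWeight (hτ : τ ≠ 0) (ha : -1 ≤ a) {t₀ c₀ : ℝ} (ht₀ : 0 < t₀)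
    (hc₀ : 0 ≤ c₀) (hlow : ∀ t, t₀ ≤ t → c₀ ≤ L t) {k : ℝ}
    (hk : k ∈ Ioo 0 (1 + τ ^ 2 * t₀)⁻¹) :
    c₀ * k ^ (a - 1/2) ≤ shrinkageWeight a τ L k := by
  have hk1 : k < 1 := hk.2.trans (inv_one_add_sq_mul_lt_one hτ ht₀)
  have h1 : 1 ≤ (1 - k) ^ (-a - 1) :=
    one_le_rpow_of_pos_of_le_one_of_nonpos (by linarith) (by linarith [hk.1]) (by linarith)
  have hkr : 0 ≤ k ^ (a - 1/2) := rpow_nonneg hk.1.le _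
  calc c₀ * k ^ (a - 1/2) = k ^ (a - 1/2) * 1 * c₀ := by ring
    _ ≤ k ^ (a - 1/2) * (1 - k) ^ (-a - 1) * L (lambdaSq τ k) := by
        gcongr
        exact hlow _ (le_lambdaSq hτ hk.1 hk.2.le)

lemma shrinkageWeight_le (hτ : τ ≠ 0) (ha : -1 ≤ a) (hL : ∀ t ∈ Ioi (0:ℝ), 0 < L t)
    {M : ℝ} (hM : ∀ t ∈ Ioi (0:ℝ), L t ≤ M) (hδ : δ < 1) {k : ℝ} (hk : k ∈ Ioo 0 δ) :
    shrinkageWeight a τ L k ≤ (1 - δ) ^ (-a - 1) * M * k ^ (a - 1/2) := by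
  have hk01 : k ∈ Ioo (0:ℝ) 1 := ⟨hk.1, hk.2.trans hδ⟩
  have hpos := lambdaSq_pos hτ hk01
  have h1 : (1 - k) ^ (-a - 1) ≤ (1 - δ) ^ (-a - 1) :=
    rpow_le_rpow_of_nonpos (by linarith) (by linarith [hk.2]) (by linarith)
  have hkr : 0 ≤ k ^ (a - 1/2) := rpow_nonneg hk.1.le _
  calc shrinkageWeight a τ L k
      ≤ k ^ (a - 1/2) * (1 - δ) ^ (-a - 1) * M := by
        unfold shrinkageWeight
        gcongr
        · exact (hL _ hpos).le
        · exact hM _ hpos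
    _ = (1 - δ) ^ (-a - 1) * M * k ^ (a - 1/2) := by ring

end ShrinkageWeight

lemma shrinkageMean_shrinkageWeight (a τ : ℝ) (L : ℝ → ℝ) (x : ℝ) :
    shrinkageMean (shrinkageWeight a τ L) (x ^ 2 / 2) =
      (∫ k in Ioo (0:ℝ) 1, k ^ (a + 1/2) * (1 - k) ^ (-a - 1) *
          L ((1 / τ ^ 2) * (1 / k - 1)) * Real.exp (-k * x ^ 2 / 2)) /
        (∫ k in Ioo (0:ℝ) 1, k ^ (a - 1/2) * (1 - k) ^ (-a - 1) *
          L ((1 / τ ^ 2) * (1 / k - 1)) * Real.exp (-k * x ^ 2 / 2)) := by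
  have hexp (k : ℝ) : -(x ^ 2 / 2 * k) = -k * x ^ 2 / 2 := by ring
  unfold shrinkageMean shrinkageWeight lambdaSq
  simp only [hexp]
  congr 1
  refine setIntegral_congr_fun measurableSet_Ioo fun k hk => ?_
  rw [show a + 1/2 = a - 1/2 + 1 by ring, rpow_add_one hk.1.ne']
  ring

theorem stmt_11_general (τ a t₀ c₀ M : ℝ) (L : ℝ → ℝ)
    (hτ : τ ∈ Ioo (0:ℝ) 1) (ha : a ∈ Ioo (0:ℝ) 1)
    (hLpos : ∀ t ∈ Ioi (0:ℝ), 0 < L t)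
    (hM : ∀ t ∈ Ioi (0:ℝ), L t ≤ M)
    (ht₀ : 0 < t₀) (hc₀ : 0 < c₀) (hlow : ∀ t, t₀ ≤ t → c₀ ≤ L t) :
    Tendsto (fun x : ℝ =>
        |x * ((∫ k in Ioo (0:ℝ) 1,
                k ^ (a + 1/2) * (1 - k) ^ (-a - 1) *
                  L ((1 / τ ^ 2) * (1 / k - 1)) * Real.exp (-k * x ^ 2 / 2)) /
              (∫ k in Ioo (0:ℝ) 1,
                k ^ (a - 1/2) * (1 - k) ^ (-a - 1) *
                  L ((1 / τ ^ 2) * (1 / k - 1)) * Real.exp (-k * x ^ 2 / 2)))|)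
      (cocompact ℝ) (nhds 0) := by
  have hτ0 : τ ≠ 0 := hτ.1.ne'
  have ha1 : -1 ≤ a := by linarith [ha.1]
  set δ := (1 + τ ^ 2 * t₀)⁻¹
  have hδ1 : δ < 1 := inv_one_add_sq_mul_lt_one hτ0 ht₀
  have hrate : shrinkageMean (shrinkageWeight a τ L) =O[atTop] fun s => s⁻¹ := by
    refine shrinkageMean_isBigO_inv (b := a + 1/2) (C := (1 - δ) ^ (-a - 1) * M)
      (fun k hk => shrinkageWeight_nonneg hτ0 hLpos hk) (by linarith [ha.1]) hc₀ (by positivity)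
      hδ1.le (fun k hk => ?_) (fun k hk => ?_) <;> rw [show a + 1/2 - 1 = a - 1/2 by ring]
    · exact le_shrinkageWeight hτ0 ha1 ht₀ hc₀.le hlow hk
    · exact shrinkageWeight_le hτ0 ha1 hLpos hM hδ1 hk
  simpa [shrinkageMean_shrinkageWeight] using (tendsto_mul_comp_half_sq_cocompact hrate).abs

/-- tail robustness: |T_τ(x) - x| = |x · E(κ|x,τ)| → 0 as |x| → ∞,
for each fixed τ ∈ (0,1). -/
theorem stmt_11 (τ a t₀ c₀ M : ℝ) (L : ℝ → ℝ)
    (hτ : τ ∈ Ioo (0:ℝ) 1) (ha : a ∈ Ioo (0:ℝ) 1)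
    (hL : Measurable L) (hLpos : ∀ t ∈ Ioi (0:ℝ), 0 < L t)
    (hM : ∀ t ∈ Ioi (0:ℝ), L t ≤ M)
    (ht₀ : 0 < t₀) (hc₀ : 0 < c₀) (hlow : ∀ t, t₀ ≤ t → c₀ ≤ L t) :
    Tendsto (fun x : ℝ =>
        |x * ((∫ k in Ioo (0:ℝ) 1,
                k ^ (a + 1/2) * (1 - k) ^ (-a - 1) *
                  L ((1 / τ ^ 2) * (1 / k - 1)) * Real.exp (-k * x ^ 2 / 2)) /
              (∫ k in Ioo (0:ℝ) 1,
                k ^ (a - 1/2) * (1 - k) ^ (-a - 1) *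
                  L ((1 / τ ^ 2) * (1 / k - 1)) * Real.exp (-k * x ^ 2 / 2)))|)
      (cocompact ℝ) (nhds 0) :=
  stmt_11_general τ a t₀ c₀ M L hτ ha hLpos hM ht₀ hc₀ hlow
end
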